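/- arXiv:2106.11279 — 4 statements merged into one kernel-verified Lean document; each statement's English description precedes it below -/
import Mathlib

section
/- Let (f_n)_{n∈ℕ} be a martingale with values in a Hilbert space H. Then for every N ∈ ℕ, E(|f_0| + (1/3)·Σ_{n=1}^{N} |df_n|²/f*_n) ≤ E(f*_N), where terms |df_n|²/f*_n are interpreted as 0 when f*_n = 0. -/
open MeasureTheory Filter Set Finset

/-- Running maximum `f*_n(ω) = max_{k ≤ n} ‖f_k(ω)‖` of a vector-valued process. -/
noncomputable def mstar {Ω X : Type*} [NormedAddCommGroup X] (f : ℕ → Ω → X) (n : ℕ) (ω : Ω) : ℝ :=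
  (Finset.range (n + 1)).sup' (Finset.nonempty_range_iff.mpr (Nat.succ_ne_zero n))
    (fun k => ‖f k ω‖)

open RealInnerProductSpace


section mstarlemmas
variable {Ω X : Type*} [NormedAddCommGroup X]

lemma norm_le_mstar (f : ℕ → Ω → X) {k n : ℕ} (hk : k ≤ n) (ω : Ω) : ‖f k ω‖ ≤ mstar f n ω := by
  unfold mstar
  exact Finset.le_sup' (fun k => ‖f k ω‖) (Finset.mem_range.mpr (Nat.lt_succ_of_le hk))

lemma mstar_nonneg (f : ℕ → Ω → X) (n : ℕ) (ω : Ω) : 0 ≤ mstar f n ω :=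
  (norm_nonneg _).trans (norm_le_mstar f (Nat.zero_le n) ω)

lemma mstar_zero (f : ℕ → Ω → X) (ω : Ω) : mstar f 0 ω = ‖f 0 ω‖ := by
  simp [mstar]

lemma mstar_succ (f : ℕ → Ω → X) (n : ℕ) (ω : Ω) :
    mstar f (n+1) ω = max (mstar f n ω) ‖f (n+1) ω‖ := by
  apply le_antisymm
  · apply Finset.sup'_le
    intro k hk
    rcases Nat.lt_succ_iff_lt_or_eq.mp (Finset.mem_range.mp hk) with h | h
    · exact le_max_of_le_left (norm_le_mstar f (Nat.lt_succ_iff.mp h) ω)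
    · subst h; exact le_max_right _ _
  · apply max_le
    · apply Finset.sup'_le
      intro k hk
      exact norm_le_mstar f (Nat.lt_succ_iff.mp (Finset.mem_range.mp hk) |>.trans n.le_succ) ω
    · exact norm_le_mstar f le_rfl ω

lemma stronglyMeasurable_mstar {m : MeasurableSpace Ω} {f : ℕ → Ω → X} {n : ℕ}
    (h : ∀ k, k ≤ n → StronglyMeasurable[m] (f k)) :
    StronglyMeasurable[m] (fun ω => mstar f n ω) := by
  induction n with
  | zero => simpa [mstar] using (h 0 le_rfl).norm
  | succ n ih =>
    have he : (fun ω => mstar f (n+1) ω) = fun ω => max (mstar f n ω) ‖f (n+1) ω‖ :=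
      funext (mstar_succ f n)
    rw [he]
    exact ((ih fun k hk => h k (hk.trans n.le_succ)).measurable.max
      (h (n+1) le_rfl).norm.measurable).stronglyMeasurable
end mstarlemmas

lemma pathwise {H : Type*} [NormedAddCommGroup H] [InnerProductSpace ℝ H]
    (a b : H) (s t : ℝ) (ha : ‖a‖ ≤ s) (ht : t = max s ‖b‖) :
    ‖b - a‖^2 / t + 2 * ⟪b - a, s⁻¹ • a⟫ ≤ (2*t + ‖b‖^2/t) - (2*s + ‖a‖^2/s) := by
  have hs0 : 0 ≤ s := (norm_nonneg a).trans ha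
  have hb : ‖b‖ ≤ t := ht ▸ le_max_right _ _
  have hst : s ≤ t := ht ▸ le_max_left _ _
  rcases eq_or_lt_of_le hs0 with h0 | hs
  · have ha0 : a = 0 := by
      have := ha; rw [← h0] at this; exact norm_le_zero_iff.mp this
    have ht0 : 0 ≤ t := hs0.trans hst
    subst ha0
    simp only [sub_zero, smul_zero, inner_zero_right, mul_zero, add_zero, ← h0, norm_zero,
      zero_pow, div_zero]
    linarith
  · have ht0 : 0 < t := lt_of_lt_of_le hs hst
    have hX : ⟪a, b⟫ ≤ s * t :=
      (real_inner_le_norm a b).trans (mul_le_mul ha hb (norm_nonneg b) hs0)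
    have hsq : ‖b - a‖^2 = ‖b‖^2 - 2 * ⟪a, b⟫ + ‖a‖^2 := by
      rw [@norm_sub_sq_real, real_inner_comm]
    have hin : ⟪b - a, s⁻¹ • a⟫ = s⁻¹ * (⟪a, b⟫ - ‖a‖^2) := by
      rw [real_inner_smul_right, inner_sub_left, real_inner_self_eq_norm_sq, real_inner_comm]
    rw [hsq, hin]
    have h2 : (t - s) * (2*⟪a,b⟫ - ‖a‖^2 - 2*s*t) ≤ 0 := by nlinarith [sq_nonneg ‖a‖]
    have h3 : ((t-s) * (2*⟪a,b⟫ - ‖a‖^2 - 2*s*t)) / (s*t) ≤ 0 :=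
      div_nonpos_iff.mpr (Or.inr ⟨h2, (mul_pos hs ht0).le⟩)
    have expand : (‖b‖^2 - 2*⟪a,b⟫ + ‖a‖^2)/t + 2*(s⁻¹*(⟪a,b⟫ - ‖a‖^2))
        - ((2*t + ‖b‖^2/t) - (2*s + ‖a‖^2/s))
        = ((t-s)*(2*⟪a,b⟫ - ‖a‖^2 - 2*s*t))/(s*t) := by
      field_simp
      ring
    linarith


lemma integral_inner_simple {Ω H : Type*} {m m0 : MeasurableSpace Ω} (hm : m ≤ m0)
    {μ : Measure Ω} [IsFiniteMeasure μ]
    [NormedAddCommGroup H] [InnerProductSpace ℝ H] [CompleteSpace H]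
    {X : Ω → H} (hX : Integrable X μ)
    (hX0 : ∀ A, MeasurableSet[m] A → ∫ ω in A, X ω ∂μ = 0)
    (g : @SimpleFunc Ω m H) : ∫ ω, ⟪X ω, g ω⟫ ∂μ = 0 := by
  have hint : ∀ (g : Ω → H), StronglyMeasurable[m] g → ∀ C : ℝ, (∀ ω, ‖g ω‖ ≤ C) →
      Integrable (fun ω => ⟪X ω, g ω⟫) μ := by
    intro g hg C hC
    refine Integrable.mono' (hX.norm.const_mul C)
      (hX.aestronglyMeasurable.inner (hg.mono hm).aestronglyMeasurable) ?_
    filter_upwards with ω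
    calc ‖⟪X ω, g ω⟫‖ ≤ ‖X ω‖ * ‖g ω‖ := norm_inner_le_norm _ _
    _ ≤ C * ‖X ω‖ := by
        rw [mul_comm]
        exact mul_le_mul_of_nonneg_right (hC ω) (norm_nonneg _)
  apply @SimpleFunc.induction Ω H m _ (fun g => ∫ ω, ⟪X ω, g ω⟫ ∂μ = 0)
    (fun c A hA => ?_) (fun g₁ g₂ hdisj h₁ h₂ => ?_) g
  · classical
    simp only [@SimpleFunc.coe_piecewise _ _ m, @SimpleFunc.coe_const _ _ m,
      @SimpleFunc.coe_zero _ _ m]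
    have heq : (fun ω => ⟪X ω, A.piecewise (Function.const Ω c) (Function.const Ω 0) ω⟫)
        = Set.indicator A (fun ω => ⟪X ω, c⟫) := by
      ext ω
      simp only [Set.piecewise, Set.indicator, Function.const]
      split_ifs
      · rfl
      · exact inner_zero_right _
    rw [heq, integral_indicator (hm _ hA)]
    have h2 : ∫ ω in A, ⟪X ω, c⟫ ∂μ = ⟪∫ ω in A, X ω ∂μ, c⟫ := by
      calc ∫ ω in A, ⟪X ω, c⟫ ∂μ = ∫ ω in A, ⟪c, X ω⟫ ∂μ := by
            congr 1; ext ω; exact real_inner_comm _ _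
      _ = ⟪c, ∫ ω in A, X ω ∂μ⟫ := integral_inner hX.integrableOn c
      _ = ⟪∫ ω in A, X ω ∂μ, c⟫ := real_inner_comm _ _
    rw [h2, hX0 A hA, inner_zero_left]
  · have hadd : ⇑(g₁ + g₂) = ⇑g₁ + ⇑g₂ := @SimpleFunc.coe_add Ω H m _ g₁ g₂
    obtain ⟨C₁, hC₁⟩ := @SimpleFunc.exists_forall_norm_le Ω H m _ g₁
    obtain ⟨C₂, hC₂⟩ := @SimpleFunc.exists_forall_norm_le Ω H m _ g₂
    have i1 := hint g₁ (@SimpleFunc.stronglyMeasurable Ω H m _ g₁) C₁ hC₁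
    have i2 := hint g₂ (@SimpleFunc.stronglyMeasurable Ω H m _ g₂) C₂ hC₂
    calc ∫ ω, ⟪X ω, (g₁ + g₂) ω⟫ ∂μ = ∫ ω, (⟪X ω, g₁ ω⟫ + ⟪X ω, g₂ ω⟫) ∂μ := by
          congr 1; ext ω; rw [hadd]; simp [inner_add_right]
    _ = (∫ ω, ⟪X ω, g₁ ω⟫ ∂μ) + ∫ ω, ⟪X ω, g₂ ω⟫ ∂μ := integral_add i1 i2
    _ = 0 := by rw [h₁, h₂, add_zero]

lemma integral_inner_eq_zero {Ω H : Type*} {m m0 : MeasurableSpace Ω} (hm : m ≤ m0)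
    {μ : Measure Ω} [IsFiniteMeasure μ]
    [NormedAddCommGroup H] [InnerProductSpace ℝ H] [CompleteSpace H]
    {X v : Ω → H} (hX : Integrable X μ)
    (hX0 : ∀ A, MeasurableSet[m] A → ∫ ω in A, X ω ∂μ = 0)
    (hv : StronglyMeasurable[m] v) (hc : ∀ ω, ‖v ω‖ ≤ 1) :
    ∫ ω, ⟪X ω, v ω⟫ ∂μ = 0 := by
  set vs := hv.approxBounded 1 with hvs
  have hbd : ∀ n ω, ‖vs n ω‖ ≤ 1 := fun n ω => hv.norm_approxBounded_le zero_le_one n ω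
  have htend : ∀ ω, Filter.Tendsto (fun n => vs n ω) atTop (nhds (v ω)) := fun ω =>
    hv.tendsto_approxBounded_of_norm_le (hc ω)
  have hmeas : ∀ n, AEStronglyMeasurable (fun ω => ⟪X ω, vs n ω⟫) μ := fun n =>
    hX.aestronglyMeasurable.inner
      (((vs n).stronglyMeasurable.mono hm).aestronglyMeasurable)
  have hdom : ∀ n, ∀ᵐ ω ∂μ, ‖⟪X ω, vs n ω⟫‖ ≤ ‖X ω‖ := by
    intro n
    filter_upwards with ω
    calc ‖⟪X ω, vs n ω⟫‖ ≤ ‖X ω‖ * ‖vs n ω‖ := norm_inner_le_norm _ _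
    _ ≤ ‖X ω‖ * 1 := mul_le_mul_of_nonneg_left (hbd n ω) (norm_nonneg _)
    _ = ‖X ω‖ := mul_one _
  have hlim : ∀ᵐ ω ∂μ, Filter.Tendsto (fun n => ⟪X ω, vs n ω⟫) atTop (nhds ⟪X ω, v ω⟫) := by
    filter_upwards with ω
    exact (continuous_inner.comp (Continuous.prodMk_right (X ω))).continuousAt.tendsto.comp (htend ω)
  have key := tendsto_integral_of_dominated_convergence (fun ω => ‖X ω‖) hmeas hX.norm hdom hlim
  have hzero : (fun n => ∫ ω, ⟪X ω, vs n ω⟫ ∂μ) = fun _ => (0:ℝ) := by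
    funext n
    exact integral_inner_simple hm hX hX0 (vs n)
  rw [hzero] at key
  exact (tendsto_nhds_unique tendsto_const_nhds key).symm

/-- Unweighted Davis-type inequality with constant 1/3 for Hilbert-space-valued martingales. -/
theorem davis_one_third
    {Ω : Type*} {mΩ : MeasurableSpace Ω} {μ : Measure Ω} [IsProbabilityMeasure μ]
    {ℱ : Filtration ℕ mΩ}
    {H : Type*} [NormedAddCommGroup H] [InnerProductSpace ℝ H] [CompleteSpace H]
    (f : ℕ → Ω → H) (hf : Martingale f ℱ μ) (N : ℕ)
    (hL : Integrable (fun ω =>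
      ‖f 0 ω‖ + (1/3) * ∑ n ∈ Finset.Icc 1 N, ‖f n ω - f (n-1) ω‖^2 / mstar f n ω) μ)
    (hR : Integrable (fun ω => mstar f N ω) μ) :
    ∫ ω, (‖f 0 ω‖ + (1/3) * ∑ n ∈ Finset.Icc 1 N, ‖f n ω - f (n-1) ω‖^2 / mstar f n ω) ∂μ
      ≤ ∫ ω, mstar f N ω ∂μ := by
  have hm : ∀ n : ℕ, (ℱ n : MeasurableSpace Ω) ≤ mΩ := fun n => ℱ.le n
  set v : ℕ → Ω → H := fun n ω => (mstar f n ω)⁻¹ • f n ω with hv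
  set I : ℕ → Ω → ℝ := fun n ω => ⟪f n ω - f (n-1) ω, v (n-1) ω⟫ with hI
  have hfm : ∀ n, StronglyMeasurable (f n) := fun n => (hf.stronglyAdapted n).mono (hm n)
  have hv_bd : ∀ n ω, ‖v n ω‖ ≤ 1 := by
    intro n ω
    have hnn := mstar_nonneg f n ω
    have hle := norm_le_mstar f (le_refl n) ω
    rcases eq_or_lt_of_le hnn with h0 | h0
    · have : v n ω = 0 := by rw [hv]; simp [← h0]
      rw [this, norm_zero]; exact zero_le_one
    · rw [show v n ω = (mstar f n ω)⁻¹ • f n ω from rfl, norm_smul, Real.norm_eq_abs,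
        abs_of_pos (inv_pos.mpr h0), ← div_eq_inv_mul]
      exact div_le_one_of_le₀ hle hnn
  have hv_meas : ∀ n, StronglyMeasurable[ℱ n] (v n) := fun n =>
    ((stronglyMeasurable_mstar fun k hk =>
      ((hf.stronglyAdapted k).mono (ℱ.mono hk))).measurable.inv.stronglyMeasurable).smul (hf.stronglyAdapted n)
  have hI_int : ∀ n, Integrable (I n) μ := by
    intro n
    refine Integrable.mono' ((hf.integrable n).norm.add (hf.integrable (n-1)).norm)
      (((hf.integrable n).sub (hf.integrable (n-1))).aestronglyMeasurable.inner
        (((hv_meas (n-1)).mono (hm _)).aestronglyMeasurable)) ?_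
    filter_upwards with ω
    calc ‖I n ω‖ ≤ ‖f n ω - f (n-1) ω‖ * ‖v (n-1) ω‖ := norm_inner_le_norm _ _
    _ ≤ (‖f n ω‖ + ‖f (n-1) ω‖) * 1 :=
        mul_le_mul (norm_sub_le _ _) (hv_bd _ ω) (norm_nonneg _) (by positivity)
    _ = ‖f n ω‖ + ‖f (n-1) ω‖ := mul_one _
  have hI_zero : ∀ n, 1 ≤ n → ∫ ω, I n ω ∂μ = 0 := by
    intro n hn
    obtain ⟨k, rfl⟩ : ∃ k, n = k + 1 := ⟨n - 1, (Nat.succ_pred_eq_of_pos hn).symm⟩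
    refine integral_inner_eq_zero (hm k) ((hf.integrable (k+1)).sub (hf.integrable k))
      (fun A hA => ?_) (hv_meas k) (hv_bd k)
    simp only [Nat.add_sub_cancel]
    rw [integral_sub ((hf.integrable (k+1)).integrableOn) ((hf.integrable k).integrableOn),
      ← hf.setIntegral_eq k.le_succ hA, sub_self]
  have hpt : ∀ ω, ‖f 0 ω‖ + (1/3) * ∑ n ∈ Finset.Icc 1 N, ‖f n ω - f (n-1) ω‖^2 / mstar f n ω
      ≤ mstar f N ω - (2/3) * ∑ n ∈ Finset.Icc 1 N, I n ω := by
    intro ω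
    set G : ℕ → ℝ := fun n => 2 * mstar f n ω + ‖f n ω‖^2 / mstar f n ω with hG
    have hstep : ∀ n ∈ Finset.Icc 1 N,
        ‖f n ω - f (n-1) ω‖^2 / mstar f n ω + 2 * I n ω ≤ G n - G (n-1) := by
      intro n hn
      obtain ⟨k, rfl⟩ : ∃ k, n = k + 1 :=
        ⟨n - 1, (Nat.succ_pred_eq_of_pos (Finset.mem_Icc.mp hn).1).symm⟩
      have hp := pathwise (f k ω) (f (k+1) ω) (mstar f k ω) (mstar f (k+1) ω)
        (norm_le_mstar f le_rfl ω) (mstar_succ f k ω)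
      exact hp
    have hsum := Finset.sum_le_sum hstep
    rw [Finset.sum_add_distrib, ← Finset.mul_sum] at hsum
    have htel : ∑ n ∈ Finset.Icc 1 N, (G n - G (n-1)) = G N - G 0 := by
      rw [← Finset.sum_range_sub G, ← Finset.Ico_add_one_right_eq_Icc, Finset.sum_Ico_eq_sum_range]
      refine Finset.sum_congr (by rw [Nat.add_sub_cancel]) (fun i _ => ?_)
      rw [Nat.add_comm 1 i, Nat.add_sub_cancel]
    have hG0 : G 0 = 3 * ‖f 0 ω‖ := by
      rw [hG]
      simp only [mstar_zero]
      rcases eq_or_ne ‖f 0 ω‖ 0 with h | h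
      · rw [h]; norm_num
      · rw [sq, mul_div_assoc, div_self h, mul_one]; ring
    have hGN : G N ≤ 3 * mstar f N ω := by
      have h1 : ‖f N ω‖^2 / mstar f N ω ≤ mstar f N ω := by
        rcases eq_or_lt_of_le (mstar_nonneg f N ω) with h | h
        · rw [← h]; simp
        · rw [div_le_iff₀ h]
          have h2 := norm_le_mstar f (le_refl N) ω
          calc ‖f N ω‖^2 ≤ (mstar f N ω)^2 := pow_le_pow_left₀ (norm_nonneg _) h2 2
          _ = mstar f N ω * mstar f N ω := sq (mstar f N ω)
      have h3 : G N = 2 * mstar f N ω + ‖f N ω‖^2 / mstar f N ω := rfl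
      rw [h3]
      linarith
    rw [htel] at hsum
    clear_value G v I
    linarith
  have hsum_int : Integrable (fun ω => ∑ n ∈ Finset.Icc 1 N, I n ω) μ :=
    integrable_finset_sum _ (fun n _ => hI_int n)
  have hRint : Integrable (fun ω => mstar f N ω - (2/3) * ∑ n ∈ Finset.Icc 1 N, I n ω) μ :=
    hR.sub (hsum_int.const_mul _)
  calc ∫ ω, (‖f 0 ω‖ + (1/3) * ∑ n ∈ Finset.Icc 1 N, ‖f n ω - f (n-1) ω‖^2 / mstar f n ω) ∂μ
      ≤ ∫ ω, (mstar f N ω - (2/3) * ∑ n ∈ Finset.Icc 1 N, I n ω) ∂μ :=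
        integral_mono hL hRint hpt
  _ = ∫ ω, mstar f N ω ∂μ - (2/3) * ∑ n ∈ Finset.Icc 1 N, ∫ ω, I n ω ∂μ := by
        rw [integral_sub hR (hsum_int.const_mul _), integral_const_mul,
          integral_finset_sum _ (fun n _ => hI_int n)]
  _ = ∫ ω, mstar f N ω ∂μ := by
        rw [Finset.sum_eq_zero (fun n hn => hI_zero n (Finset.mem_Icc.mp hn).1)]
        ring
end

section
/- Let (f_n)_{n∈ℕ} be a martingale with values in a Hilbert space H and N ∈ ℕ. Then E(S_N f) ≤ E((f*_N)^{1/2}·(Σ_{n=1}^{N} |df_n|²/f*_n)^{1/2}) ≤ (E f*_N)^{1/2} · (E Σ_{n=1}^{N} |df_n|²/f*_n)^{1/2}, where terms |df_n|²/f*_n are interpreted as 0 when f*_n = 0. -/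
open MeasureTheory Filter Set Finset

/-- Hölder-type estimate relating the expectation of the square function `S_N f` to
`E((f*_N)^{1/2} (Σ |df_n|²/f*_n)^{1/2})` and to `(E f*_N)^{1/2} (E Σ |df_n|²/f*_n)^{1/2}`. -/
theorem square_function_Holder_estimate
    {Ω : Type*} {mΩ : MeasurableSpace Ω} {μ : Measure Ω} [IsProbabilityMeasure μ]
    {ℱ : Filtration ℕ mΩ}
    {H : Type*} [NormedAddCommGroup H] [InnerProductSpace ℝ H] [CompleteSpace H]
    (f : ℕ → Ω → H) (hf : Martingale f ℱ μ) (N : ℕ)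
    (hS : Integrable (fun ω =>
      Real.sqrt (∑ n ∈ Finset.Icc 1 N, ‖f n ω - f (n-1) ω‖^2)) μ)
    (hMid : Integrable (fun ω =>
      Real.sqrt (mstar f N ω)
        * Real.sqrt (∑ n ∈ Finset.Icc 1 N, ‖f n ω - f (n-1) ω‖^2 / mstar f n ω)) μ)
    (hMax : Integrable (fun ω => mstar f N ω) μ)
    (hSum : Integrable (fun ω =>
      ∑ n ∈ Finset.Icc 1 N, ‖f n ω - f (n-1) ω‖^2 / mstar f n ω) μ) :
    (∫ ω, Real.sqrt (∑ n ∈ Finset.Icc 1 N, ‖f n ω - f (n-1) ω‖^2) ∂μ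
        ≤ ∫ ω, Real.sqrt (mstar f N ω)
            * Real.sqrt (∑ n ∈ Finset.Icc 1 N, ‖f n ω - f (n-1) ω‖^2 / mstar f n ω) ∂μ)
    ∧ (∫ ω, Real.sqrt (mstar f N ω)
            * Real.sqrt (∑ n ∈ Finset.Icc 1 N, ‖f n ω - f (n-1) ω‖^2 / mstar f n ω) ∂μ
        ≤ Real.sqrt (∫ ω, mstar f N ω ∂μ)
            * Real.sqrt (∫ ω, ∑ n ∈ Finset.Icc 1 N, ‖f n ω - f (n-1) ω‖^2 / mstar f n ω ∂μ)) := by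
  have hnn : ∀ n (ω : Ω), 0 ≤ mstar f n ω := fun n ω =>
    le_trans (norm_nonneg (f 0 ω))
      (Finset.le_sup' (fun k => ‖f k ω‖) (Finset.mem_range.mpr (Nat.succ_pos n)))
  have hsumnn : ∀ ω : Ω, 0 ≤ ∑ n ∈ Finset.Icc 1 N, ‖f n ω - f (n-1) ω‖^2 / mstar f n ω :=
    fun ω => Finset.sum_nonneg fun n _ => div_nonneg (sq_nonneg _) (hnn n ω)
  constructor
  · refine integral_mono hS hMid fun ω => ?_
    rw [← Real.sqrt_mul (hnn N ω)]
    apply Real.sqrt_le_sqrt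
    rw [Finset.mul_sum]
    refine Finset.sum_le_sum fun n hn => ?_
    rcases eq_or_lt_of_le (hnn n ω) with h0 | h0
    · have hfn : ‖f n ω‖ ≤ 0 := by
        rw [h0]
        exact Finset.le_sup' (fun k => ‖f k ω‖) (Finset.mem_range.mpr (Nat.lt_succ_self n))
      have hfn1 : ‖f (n-1) ω‖ ≤ 0 := by
        rw [h0]
        exact Finset.le_sup' (fun k => ‖f k ω‖) (Finset.mem_range.mpr (by omega))
      have h1 : f n ω = 0 := norm_le_zero_iff.mp hfn
      have h2 : f (n-1) ω = 0 := norm_le_zero_iff.mp hfn1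
      simp [h1, h2]
    · rw [Finset.mem_Icc] at hn
      have hmono : mstar f n ω ≤ mstar f N ω :=
        Finset.sup'_mono (fun k => ‖f k ω‖) (Finset.range_subset_range.mpr (by omega))
          (Finset.nonempty_range_iff.mpr (Nat.succ_ne_zero n))
      calc ‖f n ω - f (n-1) ω‖^2
          = ‖f n ω - f (n-1) ω‖^2 / mstar f n ω * mstar f n ω := by
            field_simp
        _ ≤ ‖f n ω - f (n-1) ω‖^2 / mstar f n ω * mstar f N ω := by
            gcongr
        _ = mstar f N ω * (‖f n ω - f (n-1) ω‖^2 / mstar f n ω) := mul_comm _ _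
  · have hg : MemLp (fun ω => Real.sqrt (mstar f N ω)) 2 μ := by
      rw [memLp_two_iff_integrable_sq
        (Real.continuous_sqrt.comp_aestronglyMeasurable hMax.aestronglyMeasurable)]
      exact hMax.congr (Eventually.of_forall fun ω => (Real.sq_sqrt (hnn N ω)).symm)
    have hh : MemLp (fun ω => Real.sqrt
        (∑ n ∈ Finset.Icc 1 N, ‖f n ω - f (n-1) ω‖^2 / mstar f n ω)) 2 μ := by
      rw [memLp_two_iff_integrable_sq
        (Real.continuous_sqrt.comp_aestronglyMeasurable hSum.aestronglyMeasurable)]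
      exact hSum.congr (Eventually.of_forall fun ω => (Real.sq_sqrt (hsumnn ω)).symm)
    have h2 : (2 : ℝ).HolderConjugate 2 := Real.HolderConjugate.two_two
    have key := integral_mul_le_Lp_mul_Lq_of_nonneg h2
      (Eventually.of_forall fun ω => Real.sqrt_nonneg (mstar f N ω))
      (Eventually.of_forall fun ω => Real.sqrt_nonneg _)
      (by simpa using hg) (by simpa using hh)
    have e2 : (2:ℝ) = ((2:ℕ):ℝ) := by norm_num
    have eg : (∫ ω, Real.sqrt (mstar f N ω) ^ (2:ℝ) ∂μ) = ∫ ω, mstar f N ω ∂μ :=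
      integral_congr_ae (Eventually.of_forall fun ω =>
        show Real.sqrt (mstar f N ω) ^ (2:ℝ) = mstar f N ω by
          rw [e2, Real.rpow_natCast, Real.sq_sqrt (hnn N ω)])
    have eh : (∫ ω, Real.sqrt (∑ n ∈ Finset.Icc 1 N,
          ‖f n ω - f (n-1) ω‖^2 / mstar f n ω) ^ (2:ℝ) ∂μ)
        = ∫ ω, ∑ n ∈ Finset.Icc 1 N, ‖f n ω - f (n-1) ω‖^2 / mstar f n ω ∂μ :=
      integral_congr_ae (Eventually.of_forall fun ω =>
        show Real.sqrt (∑ n ∈ Finset.Icc 1 N,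
            ‖f n ω - f (n-1) ω‖^2 / mstar f n ω) ^ (2:ℝ) = _ by
          rw [e2, Real.rpow_natCast, Real.sq_sqrt (hsumnn ω)])
    rw [eg, eh, ← Real.sqrt_eq_rpow, ← Real.sqrt_eq_rpow] at key
    exact key
end

section
/- Let q ∈ [2,∞) and let (X, |·|) be a real Banach space that is q-uniformly convex with constant δ > 0, i.e. |(x+y)/2|^q + δ·|(x−y)/2|^q ≤ (|x|^q + |y|^q)/2 for all x, y ∈ X. Then for all x, h ∈ X, |x+h|^q ≥ |x|^q + φ'(x)h + δ̃·|h|^q with δ̃ = δ/(2^{q−1} − 1), where φ'(x)h is the one-sided directional derivative of φ(x) = |x|^q. -/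
open Filter Set Topology

/-- If a real Banach space is `q`-uniformly convex with constant `δ > 0`, then
`|x+h|^q ≥ |x|^q + φ'(x)h + δ̃ |h|^q` with `δ̃ = δ/(2^{q-1} - 1)`, where `φ'(x)h` is the
one-sided directional derivative of `φ(x) = |x|^q`. -/
theorem uniformly_convex_implies_lower_bound
    {X : Type*} [NormedAddCommGroup X] [NormedSpace ℝ X] [CompleteSpace X]
    (q : ℝ) (hq : 2 ≤ q)
    (φ' : X → X → ℝ)
    (hφ' : ∀ x h : X,
      Tendsto (fun t : ℝ => (‖x + t • h‖ ^ q - ‖x‖ ^ q) / t) (𝓝[>] (0:ℝ)) (𝓝 (φ' x h)))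
    (δ : ℝ) (hδ : 0 < δ)
    (hconv : ∀ x y : X,
      ‖(2⁻¹ : ℝ) • (x + y)‖ ^ q + δ * ‖(2⁻¹ : ℝ) • (x - y)‖ ^ q
        ≤ (‖x‖ ^ q + ‖y‖ ^ q) / 2) :
    ∀ x h : X,
      ‖x‖ ^ q + φ' x h + (δ / ((2:ℝ) ^ (q - 1) - 1)) * ‖h‖ ^ q ≤ ‖x + h‖ ^ q := by
  intro x h
  set t : ℕ → ℝ := fun n => (1/2 : ℝ) ^ n with ht
  have htpos : ∀ n, 0 < t n := fun n => pow_pos (by norm_num) n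
  set a : ℕ → ℝ := fun n => (‖x + t n • h‖ ^ q - ‖x‖ ^ q) / t n with ha
  set r : ℝ := (1/2 : ℝ) ^ (q - 1) with hrdef
  have hr0 : 0 < r := Real.rpow_pos_of_pos (by norm_num) _
  have hr1 : r < 1 := Real.rpow_lt_one (by norm_num) (by norm_num) (by linarith)
  -- the power identity
  have hpow : ∀ n : ℕ, (t n) ^ (q - 1) = r ^ n := by
    intro n
    rw [ht, hrdef]
    show ((1/2 : ℝ) ^ n) ^ (q-1) = _
    rw [← Real.rpow_natCast (1/2 : ℝ) n, ← Real.rpow_mul (by norm_num),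
      mul_comm, Real.rpow_mul (by norm_num), Real.rpow_natCast]
  -- key one-step inequality
  have step : ∀ n, a (n+1) ≤ a n - δ * ‖h‖ ^ q * r ^ (n+1) := by
    intro n
    have hT : 0 < t (n+1) := htpos (n+1)
    have htn : t n = 2 * t (n+1) := by
      show (1/2:ℝ)^n = 2 * (1/2:ℝ)^(n+1); rw [pow_succ]; ring
    have hc := hconv (x + t n • h) x
    have e1 : (2⁻¹ : ℝ) • ((x + t n • h) + x) = x + t (n+1) • h := by
      rw [htn]; module
    have e2 : (2⁻¹ : ℝ) • ((x + t n • h) - x) = t (n+1) • h := by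
      rw [htn]; module
    rw [e1, e2, norm_smul, Real.norm_eq_abs, abs_of_pos hT,
      Real.mul_rpow hT.le (norm_nonneg h)] at hc
    have hTq : (t (n+1)) ^ q = r ^ (n+1) * t (n+1) := by
      have h1 := Real.rpow_add hT (q-1) 1
      rw [sub_add_cancel, Real.rpow_one, hpow (n+1)] at h1
      exact h1
    rw [hTq] at hc
    simp only [ha]
    rw [htn]
    have e3 : (‖x + (2 * t (n+1)) • h‖^q - ‖x‖^q)/(2*t (n+1)) - δ*‖h‖^q*r^(n+1)
        = ((‖x + (2*t (n+1)) • h‖^q - ‖x‖^q)/2 - δ*‖h‖^q*(r^(n+1)*t (n+1)))/ t (n+1) := by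
      field_simp
    rw [e3]
    rw [div_le_div_iff_of_pos_right hT]
    rw [htn] at hc
    nlinarith [hc]
  -- iterated inequality
  have bound : ∀ n, a n + δ * ‖h‖ ^ q * ∑ k ∈ Finset.range n, r ^ (k+1) ≤ a 0 := by
    intro n
    induction n with
    | zero => simp
    | succ n ih =>
      rw [Finset.sum_range_succ, mul_add]
      have := step n
      linarith
  -- limits
  have hta : Tendsto a atTop (𝓝 (φ' x h)) := by
    have h0 : Tendsto t atTop (𝓝[>] (0:ℝ)) := by
      apply tendsto_nhdsWithin_of_tendsto_nhds_of_eventually_within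
      · exact tendsto_pow_atTop_nhds_zero_of_lt_one (by norm_num) (by norm_num)
      · exact Eventually.of_forall fun n => htpos n
    exact (hφ' x h).comp h0
  have hsum : Tendsto (fun n => ∑ k ∈ Finset.range n, r ^ (k+1)) atTop (𝓝 (r / (1-r))) := by
    have hgeom := (hasSum_geometric_of_lt_one hr0.le hr1).tendsto_sum_nat
    have h2 := hgeom.const_mul r
    have heq : (fun n => ∑ k ∈ Finset.range n, r ^ (k+1))
        = fun n => r * ∑ k ∈ Finset.range n, r ^ k := by
      funext n
      rw [Finset.mul_sum]
      exact Finset.sum_congr rfl fun k _ => by rw [pow_succ, mul_comm]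
    rw [heq, div_eq_mul_inv]
    exact h2
  have hlim : φ' x h + δ * ‖h‖ ^ q * (r / (1-r)) ≤ a 0 := by
    have htend : Tendsto (fun n => a n + δ * ‖h‖ ^ q * ∑ k ∈ Finset.range n, r ^ (k+1))
        atTop (𝓝 (φ' x h + δ * ‖h‖ ^ q * (r / (1-r)))) :=
      hta.add (hsum.const_mul _)
    exact le_of_tendsto htend (Eventually.of_forall bound)
  have ha0 : a 0 = ‖x + h‖ ^ q - ‖x‖ ^ q := by
    simp [ha, ht]
  -- identify the constant
  have hb1 : (1:ℝ) < (2:ℝ) ^ (q-1) :=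
    Real.one_lt_rpow_iff_of_pos (by norm_num) |>.mpr (Or.inl ⟨by norm_num, by linarith⟩)
  have hrb : r = ((2:ℝ) ^ (q-1))⁻¹ := by
    rw [hrdef, one_div, Real.inv_rpow (by norm_num : (0:ℝ) ≤ 2)]
  have hconst : δ / ((2:ℝ) ^ (q - 1) - 1) = δ * (r / (1-r)) := by
    rw [hrb]
    have hb0 : ((2:ℝ) ^ (q-1)) ≠ 0 := by positivity
    field_simp
  rw [ha0] at hlim
  rw [hconst]
  linarith
end

section
/- Let q ∈ [2,∞), let (X, |·|) be a real Banach space and δ̃ > 0 such that |x+h|^q ≥ |x|^q + φ'(x)h + δ̃·|h|^q for all x, h ∈ X. Let t₀ > 1 be the unique solution of t₀^q − 1 − q(t₀ + 1) = 0, and suppose γ ≥ max(q(t₀+1)/(t₀−1), 2q, 2^q). Define U(x, y, m, v) = δ̃·y − ((|x|^q + (γ−1)·m^q)/m^{q−1})·v for x ∈ X and y, m, v ∈ ℝ_{≥0} with |x| ≤ m, m > 0. Then for all x, h ∈ X and y, m, w, v ∈ ℝ_{≥0} with |x| ≤ m and m > 0: U(x+h, y + w·|h|^q/(max(|x+h|,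 m))^{q−1}, max(|x+h|, m), max(v, w)) ≤ U(x, y, m, v) − (v·φ'(x)h)/m^{q−1}. -/
open Filter Set Topology

private lemma secant_rpow {p x y : ℝ} (hp : 1 ≤ p) (hx : 0 ≤ x) (hy : 0 ≤ y)
    (hx1 : x ≠ 1) (hy1 : y ≠ 1) (hxy : x ≤ y) :
    (x ^ p - 1) / (x - 1) ≤ (y ^ p - 1) / (y - 1) := by
  have h := (convexOn_rpow hp).secant_mono (a := (1:ℝ))
    (mem_Ici.2 zero_le_one) (mem_Ici.2 hx) (mem_Ici.2 hy) hx1 hy1 hxy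
  simpa using h

private lemma convex_add_rpow {q β μ : ℝ} (hq : 1 ≤ q) (hβ : 0 ≤ β) (hμ : 0 ≤ μ)
    (hβμ : β ≤ μ) : (μ + β) ^ q + μ ^ q ≤ (2 * μ) ^ q + β ^ q := by
  rcases eq_or_lt_of_le (hβ.trans hβμ) with hμ0 | hμ0
  · have hβ0 : β = 0 := le_antisymm (hβμ.trans hμ0.ge) hβ
    simp [hβ0, ← hμ0]
  have hden : 0 < 2 * μ - β := by linarith
  set θ : ℝ := (μ - β) / (2 * μ - β) with hθdef
  have hθ0 : 0 ≤ θ := div_nonneg (by linarith) hden.le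
  have hθ1 : θ ≤ 1 := by rw [div_le_one hden]; linarith
  have hcv := convexOn_rpow hq
  have h1 := hcv.2 (mem_Ici.2 hβ) (mem_Ici.2 (by positivity : (0:ℝ) ≤ 2 * μ))
    hθ0 (by linarith : (0:ℝ) ≤ 1 - θ) (by ring)
  have h2 := hcv.2 (mem_Ici.2 hβ) (mem_Ici.2 (by positivity : (0:ℝ) ≤ 2 * μ))
    (by linarith : (0:ℝ) ≤ 1 - θ) hθ0 (by ring)
  have e1 : θ • β + (1 - θ) • (2 * μ) = μ + β := by
    have hθm : θ * (2 * μ - β) = μ - β := by rw [hθdef]; exact div_mul_cancel₀ _ hden.ne'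
    simp only [smul_eq_mul]; linear_combination (-1 : ℝ) * hθm
  have e2 : (1 - θ) • β + θ • (2 * μ) = μ := by
    have hθm : θ * (2 * μ - β) = μ - β := by rw [hθdef]; exact div_mul_cancel₀ _ hden.ne'
    simp only [smul_eq_mul]; linear_combination hθm
  rw [e1] at h1
  rw [e2] at h2
  simp only [smul_eq_mul] at h1 h2
  linarith

set_option maxHeartbeats 1000000 in
private lemma key_ineq (q δ' γ t₀ a b d m F v w : ℝ)
    (hq : 2 ≤ q) (hδ0 : 0 < δ')
    (ht₀ : 1 < t₀) (ht₀eq : t₀ ^ q - 1 - q * (t₀ + 1) = 0)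
    (hγ : max (q * (t₀ + 1) / (t₀ - 1)) (max (2 * q) ((2:ℝ) ^ q)) ≤ γ)
    (ha : 0 ≤ a) (hb : 0 ≤ b) (hd : 0 ≤ d) (hm : 0 < m) (ham : a ≤ m)
    (hv : 0 ≤ v) (hw : 0 ≤ w)
    (H1 : a ^ q + F + δ' * d ^ q ≤ b ^ q)
    (H2 : F ≤ q * a ^ (q - 1) * d)
    (H3 : d ≤ a + b)
    (H4 : δ' * d ^ q ≤ d ^ q) :
    δ' * w * d ^ q * m ^ (q - 1) + (a ^ q + F + (γ - 1) * m ^ q) * v * (max b m) ^ (q - 1)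
      ≤ (b ^ q + (γ - 1) * (max b m) ^ q) * (max v w) * m ^ (q - 1) := by
  have hq0 : (0:ℝ) < q := by linarith
  have hq1 : (1:ℝ) ≤ q - 1 := by linarith
  have ht0m1 : (0:ℝ) < t₀ - 1 := by linarith
  have ht0pos : (0:ℝ) < t₀ := by linarith
  have h2q4 : (4:ℝ) ≤ (2:ℝ) ^ q := by
    have h := Real.rpow_le_rpow_of_exponent_le (x := 2) one_le_two hq
    have e : (2:ℝ) ^ ((2:ℕ):ℝ) = 4 := by rw [Real.rpow_natCast]; norm_num
    rw [show ((2:ℕ):ℝ) = (2:ℝ) by norm_num] at e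
    linarith [e ▸ h]
  have hγ2q : (2:ℝ) ^ q ≤ γ := le_trans (le_max_of_le_right (le_max_right _ _)) hγ
  have hγ4 : (4:ℝ) ≤ γ := le_trans h2q4 hγ2q
  have hγq : q * (t₀ + 1) ≤ γ * (t₀ - 1) := by
    have h := le_trans (le_max_left _ _) hγ
    rwa [div_le_iff₀ ht0m1] at h
  have ht0q : t₀ ^ q = 1 + q * (t₀ + 1) := by linarith
  set M : ℝ := max b m with hMdef
  have hmM : m ≤ M := le_max_right _ _
  have hbM : b ≤ M := le_max_left _ _
  have hM0 : (0:ℝ) < M := lt_of_lt_of_le hm hmM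
  have hP : (0:ℝ) < m ^ (q - 1) := Real.rpow_pos_of_pos hm _
  have hQ : (0:ℝ) < M ^ (q - 1) := Real.rpow_pos_of_pos hM0 _
  have hPQ : m ^ (q - 1) ≤ M ^ (q - 1) := Real.rpow_le_rpow hm.le hmM (by linarith)
  have hmqMq : m ^ q ≤ M ^ q := Real.rpow_le_rpow hm.le hmM hq0.le
  have hbqMq : b ^ q ≤ M ^ q := Real.rpow_le_rpow hb hbM hq0.le
  have hDq : (0:ℝ) ≤ d ^ q := Real.rpow_nonneg hd q
  have hAq : (0:ℝ) ≤ a ^ q := Real.rpow_nonneg ha q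
  have hmq0 : (0:ℝ) < m ^ q := Real.rpow_pos_of_pos hm q
  have hbq0 : (0:ℝ) ≤ b ^ q := Real.rpow_nonneg hb q
  have hVv : v ≤ max v w := le_max_left _ _
  have hVw : w ≤ max v w := le_max_right _ _
  have hV0 : (0:ℝ) ≤ max v w := le_trans hv hVv
  rcases le_total (a ^ q + F + (γ - 1) * m ^ q) 0 with hc | hc
  · -- Case I : the coefficient is nonpositive
    have h1 : (a ^ q + F + (γ - 1) * m ^ q) * v * M ^ (q - 1) ≤ 0 := by
      rw [mul_assoc]
      exact mul_nonpos_iff.2 (Or.inr ⟨hc, mul_nonneg hv hQ.le⟩)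
    have hdb : δ' * d ^ q ≤ b ^ q + (γ - 1) * M ^ q := by
      have hd2 : d ^ q ≤ (m + b) ^ q := Real.rpow_le_rpow hd (by linarith) hq0.le
      rcases le_total b m with hbm | hmb
      · have conv : (m + b) ^ q + m ^ q ≤ (2 * m) ^ q + b ^ q :=
          convex_add_rpow (by linarith) hb hm.le hbm
        have h2m : (2 * m) ^ q = 2 ^ q * m ^ q := Real.mul_rpow (by norm_num) hm.le
        have p1 : (2 ^ q - 1) * m ^ q ≤ (γ - 1) * m ^ q :=
          mul_le_mul_of_nonneg_right (by linarith) hmq0.le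
        have p2 : (γ - 1) * m ^ q ≤ (γ - 1) * M ^ q :=
          mul_le_mul_of_nonneg_left hmqMq (by linarith)
        linarith only [H4, hd2, conv, h2m, p1, p2]
      · have hd3 : (m + b) ^ q ≤ (2 * b) ^ q :=
          Real.rpow_le_rpow (by linarith) (by linarith) hq0.le
        have h2b : (2 * b) ^ q = 2 ^ q * b ^ q := Real.mul_rpow (by norm_num) hb
        have p1 : 2 ^ q * b ^ q ≤ γ * b ^ q := mul_le_mul_of_nonneg_right hγ2q hbq0
        have p2 : (γ - 1) * b ^ q ≤ (γ - 1) * M ^ q :=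
          mul_le_mul_of_nonneg_left hbqMq (by linarith)
        linarith only [H4, hd2, hd3, h2b, p1, p2]
    have s1 : δ' * w * d ^ q * m ^ (q - 1) ≤ (b ^ q + (γ - 1) * M ^ q) * (w * m ^ (q - 1)) := by
      have h := mul_le_mul_of_nonneg_right hdb (mul_nonneg hw hP.le)
      linarith only [h]
    have s2 : (b ^ q + (γ - 1) * M ^ q) * (w * m ^ (q - 1))
        ≤ (b ^ q + (γ - 1) * M ^ q) * (max v w * m ^ (q - 1)) := by
      have hnn : (0:ℝ) ≤ b ^ q + (γ - 1) * M ^ q := by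
        have hmm := mul_nonneg (by linarith : (0:ℝ) ≤ γ - 1) (Real.rpow_nonneg hM0.le q)
        linarith only [hmm, hbq0]
      exact mul_le_mul_of_nonneg_left (mul_le_mul_of_nonneg_right hVw hP.le) hnn
    linarith only [s1, s2, h1]
  · -- Case II : the coefficient is nonnegative
    have main : δ' * d ^ q * m ^ (q - 1) + (a ^ q + F + (γ - 1) * m ^ q) * M ^ (q - 1)
        ≤ (b ^ q + (γ - 1) * M ^ q) * m ^ (q - 1) := by
      rcases le_total b m with hbm | hmb
      · have hMm : M = m := max_eq_right hbm
        rw [hMm]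
        have h := mul_le_mul_of_nonneg_right
          (show δ' * d ^ q + (a ^ q + F + (γ - 1) * m ^ q) ≤ b ^ q + (γ - 1) * m ^ q by linarith)
          hP.le
        linarith only [h]
      · have hMb : M = b := max_eq_left hmb
        rw [hMb]
        have hb0 : (0:ℝ) < b := lt_of_lt_of_le hm hmb
        have hB1 : (0:ℝ) < b ^ (q - 1) := Real.rpow_pos_of_pos hb0 _
        have hPB1 : m ^ (q - 1) ≤ b ^ (q - 1) := Real.rpow_le_rpow hm.le hmb (by linarith)
        have hbq : b ^ q = b * b ^ (q - 1) := by
          have h := Real.rpow_add hb0 1 (q - 1)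
          rw [Real.rpow_one] at h
          rw [show (1:ℝ) + (q - 1) = q by ring] at h
          exact h
        have hmq : m ^ q = m * m ^ (q - 1) := by
          have h := Real.rpow_add hm 1 (q - 1)
          rw [Real.rpow_one] at h
          rw [show (1:ℝ) + (q - 1) = q by ring] at h
          exact h
        rcases le_total b (t₀ * m) with hbt | hbt
        · -- small ratio regime
          have step : (b / m) ^ q - 1 ≤ γ * (b / m - 1) := by
            rcases eq_or_lt_of_le ((one_le_div hm).2 hmb) with h1t | h1t
            · rw [← h1t, Real.one_rpow]; linarith only []
            · have hne1 : b / m ≠ 1 := ne_of_gt h1t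
              have hne2 : t₀ ≠ 1 := by intro hcon; rw [hcon] at ht₀; linarith
              have htt0 : b / m ≤ t₀ := (div_le_iff₀ hm).2 (by linarith)
              have sec := secant_rpow (p := q) (by linarith) (by positivity) ht0pos.le
                hne1 hne2 htt0
              have h1 : (0:ℝ) < b / m - 1 := by linarith
              rw [div_le_div_iff₀ h1 ht0m1] at sec
              have hγ' : (t₀ ^ q - 1) * (b / m - 1) ≤ γ * (t₀ - 1) * (b / m - 1) := by
                have e : t₀ ^ q - 1 = q * (t₀ + 1) := by linarith
                rw [e]
                exact mul_le_mul_of_nonneg_right hγq h1.le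
              have comb : ((b / m) ^ q - 1) * (t₀ - 1) ≤ γ * (b / m - 1) * (t₀ - 1) := by
                linarith only [sec, hγ']
              exact le_of_mul_le_mul_right comb ht0m1
          have htq : (b / m) ^ q = b ^ q / m ^ q := Real.div_rpow hb hm.le q
          rw [htq] at step
          have step2 : b ^ q - m ^ q ≤ γ * (b - m) * m ^ (q - 1) := by
            have h3 := mul_le_mul_of_nonneg_right step hmq0.le
            have e1 : (b ^ q / m ^ q - 1) * m ^ q = b ^ q - m ^ q := by
              field_simp
            have e2 : γ * (b / m - 1) * m ^ q = γ * (b - m) * m ^ (q - 1) := by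
              rw [hmq]; field_simp
            rw [e1, e2] at h3
            exact h3
          have E1 : b ^ q * b ^ (q - 1) + (γ - 1) * m ^ q * b ^ (q - 1)
              ≤ γ * b ^ q * m ^ (q - 1) := by
            have e := mul_le_mul_of_nonneg_right step2 hB1.le
            have h5 : γ * b ^ q * m ^ (q - 1) = γ * b * m ^ (q - 1) * b ^ (q - 1) := by
              rw [hbq]; ring
            have h6 : γ * m ^ q * b ^ (q - 1) = γ * m * m ^ (q - 1) * b ^ (q - 1) := by
              rw [hmq]; ring
            linarith only [e, h5, h6]
          have u1 : (δ' * d ^ q + (a ^ q + F)) * b ^ (q - 1) ≤ b ^ q * b ^ (q - 1) :=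
            mul_le_mul_of_nonneg_right (by linarith) hB1.le
          have u2 : δ' * d ^ q * m ^ (q - 1) ≤ δ' * d ^ q * b ^ (q - 1) :=
            mul_le_mul_of_nonneg_left hPB1 (mul_nonneg hδ0.le hDq)
          linarith only [u1, u2, E1]
        · -- large ratio regime
          have hu0 : (0:ℝ) < m / b := div_pos hm hb0
          have hu00 : (0:ℝ) < 1 / t₀ := by positivity
          have hu01 : 1 / t₀ < 1 := by rw [div_lt_one ht0pos]; exact ht₀
          have huu0 : m / b ≤ 1 / t₀ := by
            rw [div_le_div_iff₀ hb0 ht0pos]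
            linarith
          have hu1 : m / b < 1 := lt_of_le_of_lt huu0 hu01
          have h1u : (0:ℝ) < 1 - m / b := by linarith
          have h1u0 : (0:ℝ) < 1 - 1 / t₀ := by linarith
          have E5 : ((1 + q) * (m / b) + q) * (1 - (m / b) ^ (q - 1))
              ≤ (γ - 1) * (1 - m / b) := by
            have hT : (0:ℝ) < t₀ ^ (q - 1) := Real.rpow_pos_of_pos ht0pos _
            have hTt : t₀ * t₀ ^ (q - 1) = t₀ ^ q := by
              have h := Real.rpow_add ht0pos 1 (q - 1)
              rw [Real.rpow_one] at h
              rw [show (1:ℝ) + (q - 1) = q by ring] at h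
              exact h.symm
            have sec := secant_rpow (p := q - 1) hq1 hu0.le hu00.le
              (ne_of_lt hu1) (ne_of_lt hu01) huu0
            have sl : (1 - (m / b) ^ (q - 1)) / (1 - m / b)
                ≤ (1 - (1 / t₀) ^ (q - 1)) / (1 - 1 / t₀) := by
              have e1 : ((m / b) ^ (q - 1) - 1) / (m / b - 1)
                  = (1 - (m / b) ^ (q - 1)) / (1 - m / b) := by
                rw [← neg_div_neg_eq]; ring_nf
              have e2 : ((1 / t₀) ^ (q - 1) - 1) / (1 / t₀ - 1)
                  = (1 - (1 / t₀) ^ (q - 1)) / (1 - 1 / t₀) := by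
                rw [← neg_div_neg_eq]; ring_nf
              rwa [e1, e2] at sec
            have hu0p : (1 / t₀ : ℝ) ^ (q - 1) = 1 / t₀ ^ (q - 1) := by
              rw [Real.div_rpow zero_le_one ht0pos.le, Real.one_rpow]
            have hB0 : (1 + q) * (1 / t₀) + q = t₀ ^ (q - 1) := by
              have ht0ne : t₀ ≠ 0 := ne_of_gt ht0pos
              field_simp
              linarith only [hTt, ht0q]
            have hcoef0 : (0:ℝ) ≤ (1 + q) * (m / b) + q := by positivity
            have hcoef : (1 + q) * (m / b) + q ≤ t₀ ^ (q - 1) := by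
              rw [← hB0]
              have hmm := mul_le_mul_of_nonneg_left huu0 (by linarith : (0:ℝ) ≤ 1 + q)
              linarith only [hmm]
            have hnum0 : (0:ℝ) ≤ 1 - (m / b) ^ (q - 1) := by
              have hmm := Real.rpow_le_one hu0.le hu1.le (by linarith : (0:ℝ) ≤ q - 1)
              linarith only [hmm]
            have final : t₀ ^ (q - 1) * ((1 - (1 / t₀) ^ (q - 1)) / (1 - 1 / t₀)) ≤ γ - 1 := by
              rw [hu0p]
              have ht0ne : t₀ ≠ 0 := ne_of_gt ht0pos
              have hTne : t₀ ^ (q - 1) ≠ 0 := ne_of_gt hT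
              have e3 : t₀ ^ (q - 1) * ((1 - 1 / t₀ ^ (q - 1)) / (1 - 1 / t₀))
                  = (t₀ ^ (q - 1) - 1) * t₀ / (t₀ - 1) := by
                rw [eq_div_iff (ne_of_gt ht0m1)]
                field_simp
              rw [e3, div_le_iff₀ ht0m1]
              have e5 : (t₀ ^ (q - 1) - 1) * t₀ = t₀ ^ q - t₀ := by
                linear_combination hTt
              rw [e5]
              linarith only [ht0q, hγq]
            have sl2 : 1 - (m / b) ^ (q - 1)
                ≤ (1 - (1 / t₀) ^ (q - 1)) / (1 - 1 / t₀) * (1 - m / b) := by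
              have h := mul_le_mul_of_nonneg_right sl h1u.le
              rwa [div_mul_cancel₀ _ (ne_of_gt h1u)] at h
            have c1 : ((1 + q) * (m / b) + q) * (1 - (m / b) ^ (q - 1))
                ≤ t₀ ^ (q - 1) * (1 - (m / b) ^ (q - 1)) :=
              mul_le_mul_of_nonneg_right hcoef hnum0
            have c2 := mul_le_mul_of_nonneg_left sl2 hT.le
            have c3 : t₀ ^ (q - 1) * ((1 - (1 / t₀) ^ (q - 1)) / (1 - 1 / t₀) * (1 - m / b))
                ≤ (γ - 1) * (1 - m / b) := by
              have h := mul_le_mul_of_nonneg_right final h1u.le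
              linarith only [h]
            linarith only [c1, c2, c3]
          have hupow : (m / b : ℝ) ^ (q - 1) = m ^ (q - 1) / b ^ (q - 1) :=
            Real.div_rpow hm.le hb0.le (q - 1)
          have E4 : (m + q * (m + b)) * (b ^ (q - 1) - m ^ (q - 1))
              ≤ (γ - 1) * b ^ (q - 1) * (b - m) := by
            have e5b := mul_le_mul_of_nonneg_right E5 (mul_nonneg hb0.le hB1.le)
            have eqA : ((1 + q) * (m / b) + q) * b = m + q * (m + b) := by
              field_simp; ring
            have eqB : (1 - (m / b) ^ (q - 1)) * b ^ (q - 1)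
                = b ^ (q - 1) - m ^ (q - 1) := by
              rw [hupow, sub_mul, one_mul, div_mul_cancel₀ _ (ne_of_gt hB1)]
            have eqC : (1 - m / b) * b = b - m := by field_simp
            have eq1 : ((1 + q) * (m / b) + q) * (1 - (m / b) ^ (q - 1)) * (b * b ^ (q - 1))
                = (m + q * (m + b)) * (b ^ (q - 1) - m ^ (q - 1)) := by
              calc ((1 + q) * (m / b) + q) * (1 - (m / b) ^ (q - 1)) * (b * b ^ (q - 1))
                  = (((1 + q) * (m / b) + q) * b) * ((1 - (m / b) ^ (q - 1)) * b ^ (q - 1)) := by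
                    ring
                _ = (m + q * (m + b)) * (b ^ (q - 1) - m ^ (q - 1)) := by rw [eqA, eqB]
            have eq2 : (γ - 1) * (1 - m / b) * (b * b ^ (q - 1))
                = (γ - 1) * b ^ (q - 1) * (b - m) := by
              calc (γ - 1) * (1 - m / b) * (b * b ^ (q - 1))
                  = ((1 - m / b) * b) * ((γ - 1) * b ^ (q - 1)) := by ring
                _ = (γ - 1) * b ^ (q - 1) * (b - m) := by rw [eqC]; ring
            rw [eq1, eq2] at e5b
            exact e5b
          have E3 : (m ^ q + q * m ^ (q - 1) * (m + b)) * (b ^ (q - 1) - m ^ (q - 1))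
              + (γ - 1) * m ^ q * b ^ (q - 1) ≤ (γ - 1) * b ^ q * m ^ (q - 1) := by
            have e := mul_le_mul_of_nonneg_right E4 hP.le
            have h5 : (m ^ q + q * m ^ (q - 1) * (m + b)) * (b ^ (q - 1) - m ^ (q - 1))
                = (m + q * (m + b)) * (b ^ (q - 1) - m ^ (q - 1)) * m ^ (q - 1) := by
              rw [hmq]; ring
            have h6 : (γ - 1) * b ^ q * m ^ (q - 1)
                = (γ - 1) * b * b ^ (q - 1) * m ^ (q - 1) := by rw [hbq]; ring
            have h7 : (γ - 1) * m ^ q * b ^ (q - 1)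
                = (γ - 1) * m * m ^ (q - 1) * b ^ (q - 1) := by rw [hmq]; ring
            linarith only [e, h5, h6, h7]
          have u1 : (δ' * d ^ q + (a ^ q + F)) * m ^ (q - 1) ≤ b ^ q * m ^ (q - 1) :=
            mul_le_mul_of_nonneg_right (by linarith) hP.le
          have hr2 : a ^ q + F ≤ m ^ q + q * m ^ (q - 1) * (m + b) := by
            have ha1 : a ^ (q - 1) ≤ m ^ (q - 1) := Real.rpow_le_rpow ha ham (by linarith)
            have haq : a ^ q ≤ m ^ q := Real.rpow_le_rpow ha ham hq0.le
            have h1 : a ^ (q - 1) * d ≤ m ^ (q - 1) * (m + b) :=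
              mul_le_mul ha1 (by linarith) hd hP.le
            have h2 : q * (a ^ (q - 1) * d) ≤ q * (m ^ (q - 1) * (m + b)) :=
              mul_le_mul_of_nonneg_left h1 hq0.le
            linarith only [h2, haq, H2]
          have u2 : (a ^ q + F) * (b ^ (q - 1) - m ^ (q - 1))
              ≤ (m ^ q + q * m ^ (q - 1) * (m + b)) * (b ^ (q - 1) - m ^ (q - 1)) :=
            mul_le_mul_of_nonneg_right hr2 (by linarith)
          linarith only [u1, u2, E3]
    have s1 : δ' * w * d ^ q * m ^ (q - 1) ≤ δ' * (max v w) * d ^ q * m ^ (q - 1) := by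
      have h := mul_le_mul_of_nonneg_right hVw
        (mul_nonneg (mul_nonneg hδ0.le hDq) hP.le)
      linarith only [h]
    have s2 : (a ^ q + F + (γ - 1) * m ^ q) * v * M ^ (q - 1)
        ≤ (a ^ q + F + (γ - 1) * m ^ q) * (max v w) * M ^ (q - 1) := by
      have h := mul_le_mul_of_nonneg_right (mul_le_mul_of_nonneg_left hVv hc) hQ.le
      linarith only [h]
    have s3 := mul_le_mul_of_nonneg_left main hV0
    linarith only [s1, s2, s3]

section BellmanAux
variable {X : Type*} [NormedAddCommGroup X] [NormedSpace ℝ X]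

private lemma philip_bound (q : ℝ) (hq : 2 ≤ q) (φ' : X → X → ℝ)
    (hφ' : ∀ x h : X,
      Tendsto (fun t : ℝ => (‖x + t • h‖ ^ q - ‖x‖ ^ q) / t) (𝓝[>] (0:ℝ)) (𝓝 (φ' x h)))
    (x h : X) : φ' x h ≤ q * ‖x‖ ^ (q - 1) * ‖h‖ := by
  have hq0 : (0:ℝ) < q := by linarith
  have h1 : HasDerivAt (fun t : ℝ => ‖x‖ + t * ‖h‖) ‖h‖ 0 :=
    ((hasDerivAt_mul_const ‖h‖)).const_add ‖x‖
  have h2 : HasDerivAt (fun s : ℝ => s ^ q) (q * ‖x‖ ^ (q - 1)) (‖x‖ + 0 * ‖h‖) := by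
    have := Real.hasDerivAt_rpow_const (x := ‖x‖) (p := q) (Or.inr (by linarith))
    simpa using this
  have hDer : HasDerivAt (fun t : ℝ => (‖x‖ + t * ‖h‖) ^ q) (q * ‖x‖ ^ (q - 1) * ‖h‖) 0 :=
    by have := h2.comp 0 h1; exact this
  have hslope := hasDerivAt_iff_tendsto_slope.1 hDer
  have hsub : 𝓝[>] (0:ℝ) ≤ 𝓝[≠] (0:ℝ) :=
    nhdsWithin_mono _ (fun t ht => ne_of_gt ht)
  have hTend : Tendsto (fun t : ℝ => ((‖x‖ + t * ‖h‖) ^ q - ‖x‖ ^ q) / t) (𝓝[>] (0:ℝ))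
      (𝓝 (q * ‖x‖ ^ (q - 1) * ‖h‖)) := by
    have heq : (slope (fun t : ℝ => (‖x‖ + t * ‖h‖) ^ q) 0)
        = fun t : ℝ => ((‖x‖ + t * ‖h‖) ^ q - ‖x‖ ^ q) / t := by
      funext t
      simp [slope_def_field]
    have h3 := hslope.mono_left hsub
    rwa [heq] at h3
  refine le_of_tendsto_of_tendsto (hφ' x h) hTend ?_
  filter_upwards [self_mem_nhdsWithin] with t ht
  have ht0 : (0:ℝ) < t := ht
  have hnorm : ‖x + t • h‖ ≤ ‖x‖ + t * ‖h‖ := by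
    calc ‖x + t • h‖ ≤ ‖x‖ + ‖t • h‖ := norm_add_le _ _
      _ = ‖x‖ + t * ‖h‖ := by rw [norm_smul, Real.norm_eq_abs, abs_of_pos ht0]
  have hpow : ‖x + t • h‖ ^ q ≤ (‖x‖ + t * ‖h‖) ^ q :=
    Real.rpow_le_rpow (norm_nonneg _) hnorm hq0.le
  exact div_le_div_of_nonneg_right (by linarith) ht0.le

private lemma delta_bound (q : ℝ) (hq : 2 ≤ q) (φ' : X → X → ℝ)
    (hφ' : ∀ x h : X,
      Tendsto (fun t : ℝ => (‖x + t • h‖ ^ q - ‖x‖ ^ q) / t) (𝓝[>] (0:ℝ)) (𝓝 (φ' x h)))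
    (δ' : ℝ)
    (hlb : ∀ x h : X, ‖x‖ ^ q + φ' x h + δ' * ‖h‖ ^ q ≤ ‖x + h‖ ^ q)
    (h : X) : δ' * ‖h‖ ^ q ≤ ‖h‖ ^ q := by
  have hq0 : (0:ℝ) < q := by linarith
  have hphi0 : 0 ≤ φ' 0 h := by
    refine ge_of_tendsto (hφ' 0 h) ?_
    filter_upwards [self_mem_nhdsWithin] with t ht
    have ht0 : (0:ℝ) < t := ht
    apply div_nonneg _ ht0.le
    have hz : ‖(0:X)‖ ^ q = 0 := by
      rw [norm_zero, Real.zero_rpow (ne_of_gt hq0)]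
    rw [hz]
    simpa using Real.rpow_nonneg (norm_nonneg _) q
  have h0 := hlb 0 h
  simp only [norm_zero, zero_add] at h0
  rw [Real.zero_rpow (ne_of_gt hq0)] at h0
  rw [zero_add] at h0
  linarith [hphi0, h0]

end BellmanAux

/-- The concavity property of the Bellman function
`U(x,y,m,v) = δ̃ y - ((|x|^q + (γ-1) m^q)/m^{q-1}) v`:
`U(x+h, y + w|h|^q/(|x+h| ∨ m)^{q-1}, |x+h| ∨ m, v ∨ w) ≤ U(x,y,m,v) - v φ'(x)h / m^{q-1}`,
provided `γ ≥ max(q(t₀+1)/(t₀-1), 2q, 2^q)` where `t₀ > 1` solves `t₀^q - 1 - q(t₀+1) = 0`. -/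
theorem bellman_concavity
    {X : Type*} [NormedAddCommGroup X] [NormedSpace ℝ X] [CompleteSpace X]
    (q : ℝ) (hq : 2 ≤ q)
    (φ' : X → X → ℝ)
    (hφ' : ∀ x h : X,
      Tendsto (fun t : ℝ => (‖x + t • h‖ ^ q - ‖x‖ ^ q) / t) (𝓝[>] (0:ℝ)) (𝓝 (φ' x h)))
    (δ' : ℝ) (hδ' : 0 < δ')
    (hlb : ∀ x h : X, ‖x‖ ^ q + φ' x h + δ' * ‖h‖ ^ q ≤ ‖x + h‖ ^ q)
    (t₀ : ℝ) (ht₀ : 1 < t₀) (ht₀eq : t₀ ^ q - 1 - q * (t₀ + 1) = 0)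
    (γ : ℝ) (hγ : max (q * (t₀ + 1) / (t₀ - 1)) (max (2 * q) ((2:ℝ) ^ q)) ≤ γ)
    (x h : X) (y m w v : ℝ)
    (hy : 0 ≤ y) (hw : 0 ≤ w) (hv : 0 ≤ v) (hm : 0 < m) (hxm : ‖x‖ ≤ m) :
    δ' * (y + w * ‖h‖ ^ q / (max ‖x + h‖ m) ^ (q - 1))
        - ((‖x + h‖ ^ q + (γ - 1) * (max ‖x + h‖ m) ^ q) / (max ‖x + h‖ m) ^ (q - 1))
            * max v w
      ≤ δ' * y - ((‖x‖ ^ q + (γ - 1) * m ^ q) / m ^ (q - 1)) * v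
          - v * φ' x h / m ^ (q - 1) := by
  have hq0 : (0:ℝ) < q := by linarith
  have H1 := hlb x h
  have H2 := philip_bound q hq φ' hφ' x h
  have H3 : ‖h‖ ≤ ‖x‖ + ‖x + h‖ := by
    calc ‖h‖ = ‖(x + h) - x‖ := by rw [add_sub_cancel_left]
      _ ≤ ‖x + h‖ + ‖x‖ := norm_sub_le _ _
      _ = ‖x‖ + ‖x + h‖ := by ring
  have H4 := delta_bound q hq φ' hφ' δ' hlb h
  have hG := key_ineq q δ' γ t₀ ‖x‖ ‖x + h‖ ‖h‖ m (φ' x h) v w hq hδ' ht₀ ht₀eq hγ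
    (norm_nonneg x) (norm_nonneg _) (norm_nonneg h) hm hxm hv hw H1 H2 H3 H4
  have hM0 : (0:ℝ) < max ‖x + h‖ m := lt_of_lt_of_le hm (le_max_right _ _)
  have hP : (0:ℝ) < m ^ (q - 1) := Real.rpow_pos_of_pos hm _
  have hQ : (0:ℝ) < (max ‖x + h‖ m) ^ (q - 1) := Real.rpow_pos_of_pos hM0 _
  have hPne : m ^ (q - 1) ≠ 0 := ne_of_gt hP
  have hQne : (max ‖x + h‖ m) ^ (q - 1) ≠ 0 := ne_of_gt hQ
  rw [← sub_nonneg]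
  have expand : δ' * y - ((‖x‖ ^ q + (γ - 1) * m ^ q) / m ^ (q - 1)) * v
          - v * φ' x h / m ^ (q - 1)
        - (δ' * (y + w * ‖h‖ ^ q / (max ‖x + h‖ m) ^ (q - 1))
          - ((‖x + h‖ ^ q + (γ - 1) * (max ‖x + h‖ m) ^ q) / (max ‖x + h‖ m) ^ (q - 1))
              * max v w)
      = ((‖x + h‖ ^ q + (γ - 1) * (max ‖x + h‖ m) ^ q) * (max v w) * m ^ (q - 1)
          - (δ' * w * ‖h‖ ^ q * m ^ (q - 1)
            + (‖x‖ ^ q + φ' x h + (γ - 1) * m ^ q) * v * (max ‖x + h‖ m) ^ (q - 1)))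
        / (m ^ (q - 1) * (max ‖x + h‖ m) ^ (q - 1)) := by
    field_simp
    ring
  rw [expand]
  apply div_nonneg _ (le_of_lt (mul_pos hP hQ))
  linarith only [hG]
end
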